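/- arXiv:1911.06842 — 11 statements merged into one kernel-verified Lean document; each statement's English description precedes it below -/
import Mathlib

section
/- Fix n, m, T : ℕ. Let A be a block-diagonal real matrix indexed by ι = Fin (T+1) × Fin n, B a block-diagonal real matrix with rows indexed by ι and columns by κ = Fin (T+1) × Fin m, Z the block-downshift matrix on ι, and K a block lower triangular real matrix with rows indexed by κ and columns by ι. Then I - Z*(A + B*K) is invertible, and the matrices Φx := (I - Z*(A + B*K))⁻¹ and Φu := K * Φx are block lower triangular and satisfy the affine constraint (I - Z*A) * Φx - Z*B * Φu = I. -/
/-- A matrix indexed by `(block, withinBlock)` pairs is block lower triangular if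
the `(i,j)` block vanishes whenever `i < j`. -/
def BlockLowerTriangular {T n m : ℕ}
    (M : Matrix (Fin (T + 1) × Fin n) (Fin (T + 1) × Fin m) ℝ) : Prop :=
  ∀ (i j : Fin (T + 1)) (a : Fin n) (b : Fin m), i < j → M (i, a) (j, b) = 0

/-- A matrix indexed by `(block, withinBlock)` pairs is block diagonal if
the `(i,j)` block vanishes whenever `i ≠ j`. -/
def BlockDiagonal {T n m : ℕ}
    (M : Matrix (Fin (T + 1) × Fin n) (Fin (T + 1) × Fin m) ℝ) : Prop :=
  ∀ (i j : Fin (T + 1)) (a : Fin n) (b : Fin m), i ≠ j → M (i, a) (j, b) = 0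

/-- The block-downshift matrix: identity on the first block subdiagonal, zero elsewhere. -/
def blockDownshift (T n : ℕ) :
    Matrix (Fin (T + 1) × Fin n) (Fin (T + 1) × Fin n) ℝ :=
  fun p q => if (p.1 : ℕ) = (q.1 : ℕ) + 1 ∧ p.2 = q.2 then 1 else 0

/-- strictly block lower triangular: zero when block row ≤ block col -/
def SBLT {T n m : ℕ}
    (M : Matrix (Fin (T + 1) × Fin n) (Fin (T + 1) × Fin m) ℝ) : Prop :=
  ∀ (i j : Fin (T + 1)) (a : Fin n) (b : Fin m), (i : ℕ) ≤ (j : ℕ) → M (i, a) (j, b) = 0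

lemma blt_mul {T p q r : ℕ}
    {M : Matrix (Fin (T + 1) × Fin p) (Fin (T + 1) × Fin q) ℝ}
    {N : Matrix (Fin (T + 1) × Fin q) (Fin (T + 1) × Fin r) ℝ}
    (hM : BlockLowerTriangular M) (hN : BlockLowerTriangular N) :
    BlockLowerTriangular (M * N) := by
  intro i j a b hij
  rw [Matrix.mul_apply]
  apply Finset.sum_eq_zero
  rintro ⟨l, c⟩ -
  rcases lt_or_ge l j with h | h
  · rw [hN l j c b h, mul_zero]
  · rw [hM i l a c (lt_of_lt_of_le hij h), zero_mul]

lemma sblt_mul_blt {T p q r : ℕ}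
    {M : Matrix (Fin (T + 1) × Fin p) (Fin (T + 1) × Fin q) ℝ}
    {N : Matrix (Fin (T + 1) × Fin q) (Fin (T + 1) × Fin r) ℝ}
    (hM : SBLT M) (hN : BlockLowerTriangular N) :
    SBLT (M * N) := by
  intro i j a b hij
  rw [Matrix.mul_apply]
  apply Finset.sum_eq_zero
  rintro ⟨l, c⟩ -
  rcases lt_or_ge l i with h | h
  · rw [hN l j c b (lt_of_lt_of_le h (by exact_mod_cast hij)), mul_zero]
  · rw [hM i l a c h, zero_mul]

lemma sblt_pow {T n : ℕ}
    {M : Matrix (Fin (T + 1) × Fin n) (Fin (T + 1) × Fin n) ℝ}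
    (hM : SBLT M) :
    ∀ (k : ℕ) (i j : Fin (T + 1)) (a b : Fin n),
      (i : ℕ) < (j : ℕ) + k → (M ^ k) (i, a) (j, b) = 0 := by
  intro k
  induction k with
  | zero =>
    intro i j a b h
    simp only [Nat.add_zero] at h
    rw [pow_zero]
    exact Matrix.one_apply_ne (by simp [Prod.ext_iff, Fin.ne_of_lt (show i < j from h)])
  | succ k ih =>
    intro i j a b h
    rw [pow_succ, Matrix.mul_apply]
    apply Finset.sum_eq_zero
    rintro ⟨l, c⟩ -
    rcases le_or_gt (l : ℕ) (j : ℕ) with hl | hl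
    · rw [hM l j c b hl, mul_zero]
    · rw [ih i l a c (by omega), zero_mul]

/-- Finite horizon System Level Synthesis, Theorem 1, statement (1): for any causal
(block lower triangular) LTV state feedback controller `K`, the matrix
`I - Z(A + BK)` is invertible and the resulting system responses
`Φx = (I - Z(A + BK))⁻¹`, `Φu = K Φx` are block lower triangular and lie in the
affine subspace `(I - ZA) Φx - ZB Φu = I`. -/
theorem stmt1 (n m T : ℕ)
    (A : Matrix (Fin (T + 1) × Fin n) (Fin (T + 1) × Fin n) ℝ)
    (B : Matrix (Fin (T + 1) × Fin n) (Fin (T + 1) × Fin m) ℝ)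
    (K : Matrix (Fin (T + 1) × Fin m) (Fin (T + 1) × Fin n) ℝ)
    (hA : BlockDiagonal A) (hB : BlockDiagonal B) (hK : BlockLowerTriangular K) :
    IsUnit (1 - blockDownshift T n * (A + B * K)) ∧
    BlockLowerTriangular (1 - blockDownshift T n * (A + B * K))⁻¹ ∧
    BlockLowerTriangular (K * (1 - blockDownshift T n * (A + B * K))⁻¹) ∧
    (1 - blockDownshift T n * A) * (1 - blockDownshift T n * (A + B * K))⁻¹ -
      blockDownshift T n * B * (K * (1 - blockDownshift T n * (A + B * K))⁻¹) = 1 := by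
  set Z := blockDownshift T n with hZdef
  have hZ : SBLT Z := by
    intro i j a b hij
    simp only [hZdef, blockDownshift]
    rw [if_neg]
    rintro ⟨h1, -⟩; omega
  have hAblt : BlockLowerTriangular A := fun i j a b hij => hA i j a b (Fin.ne_of_lt hij)
  have hBblt : BlockLowerTriangular B := fun i j a b hij => hB i j a b (Fin.ne_of_lt hij)
  have hABK : BlockLowerTriangular (A + B * K) := by
    intro i j a b hij
    have := blt_mul hBblt hK i j a b hij
    simp only [Matrix.add_apply, hAblt i j a b hij, this, add_zero]
  have hM : SBLT (Z * (A + B * K)) := sblt_mul_blt hZ hABK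
  set M := Z * (A + B * K) with hMdef
  set S := ∑ k ∈ Finset.range (T + 1), M ^ k with hSdef
  have hpowT : M ^ (T + 1) = 0 := by
    ext ⟨i, a⟩ ⟨j, b⟩
    rw [Matrix.zero_apply]
    exact sblt_pow hM (T + 1) i j a b (by omega)
  have hleft : S * (1 - M) = 1 := by
    have := geom_sum_mul M (T + 1)
    rw [hpowT] at this
    calc S * (1 - M) = -(S * (M - 1)) := by
          rw [mul_sub, mul_sub, mul_one]; abel
    _ = -(0 - 1) := by rw [hSdef, this]
    _ = 1 := by rw [zero_sub, neg_neg]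
  have hright : (1 - M) * S = 1 := mul_eq_one_comm.mpr hleft
  have hUnit : IsUnit (1 - M) := ⟨⟨1 - M, S, hright, hleft⟩, rfl⟩
  have hinv : (1 - M)⁻¹ = S := Matrix.inv_eq_left_inv hleft
  have hSblt : BlockLowerTriangular S := by
    intro i j a b hij
    rw [hSdef, Matrix.sum_apply]
    apply Finset.sum_eq_zero
    intro k _
    exact sblt_pow hM k i j a b (by omega)
  refine ⟨hUnit, hinv ▸ hSblt, hinv ▸ blt_mul hK hSblt, ?_⟩
  rw [hinv]
  have key : (1 - Z * A) * S - Z * B * (K * S) = (1 - M) * S := by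
    rw [hMdef, mul_add, ← Matrix.mul_assoc Z B K]
    rw [sub_mul, sub_mul, one_mul, add_mul, Matrix.mul_assoc (Z*B) K S]
    abel
  rw [key, hright]
end

section
/- Fix n, m, T : ℕ. Let A be a block-diagonal real matrix indexed by ι = Fin (T+1) × Fin n, B a block-diagonal real matrix with rows indexed by ι and columns by κ = Fin (T+1) × Fin m, and Z the block-downshift matrix on ι. Suppose Φx (indexed ι × ι) and Φu (indexed κ × ι) are block lower triangular real matrices satisfying (I - Z*A) * Φx - Z*B * Φu = I. Then Φx is invertible, the controller K := Φu * Φx⁻¹ is block lower triangular, I - Z*(A + B*K) is invertible with (I - Z*(A + B*K))⁻¹ = Φx, and K * (I - Z*(A + B*K))⁻¹ = Φu. -/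
open Matrix OrderDual

section BlockLowerTriangular

variable {T n m p : ℕ}

def StrictBlockLowerTriangular
    (M : Matrix (Fin (T + 1) × Fin n) (Fin (T + 1) × Fin m) ℝ) : Prop :=
  ∀ (i j : Fin (T + 1)) (a : Fin n) (b : Fin m), i ≤ j → M (i, a) (j, b) = 0

theorem blockLowerTriangular_iff_blockTriangular
    {M : Matrix (Fin (T + 1) × Fin n) (Fin (T + 1) × Fin n) ℝ} :
    BlockLowerTriangular M ↔ M.BlockTriangular (fun p => toDual p.1) :=
  ⟨fun h ⟨_, _⟩ ⟨_, _⟩ hij => h _ _ _ _ hij, fun h _ _ _ _ hij => h hij⟩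

theorem BlockLowerTriangular.mul {M : Matrix (Fin (T + 1) × Fin n) (Fin (T + 1) × Fin m) ℝ}
    {N : Matrix (Fin (T + 1) × Fin m) (Fin (T + 1) × Fin p) ℝ}
    (hM : BlockLowerTriangular M) (hN : BlockLowerTriangular N) :
    BlockLowerTriangular (M * N) := by
  intro i j a b hij
  rw [mul_apply]
  refine Finset.sum_eq_zero fun ⟨k, c⟩ _ => ?_
  rcases lt_or_ge i k with hik | hki
  · rw [hM i k a c hik, zero_mul]
  · rw [hN k j c b (hki.trans_lt hij), mul_zero]

theorem StrictBlockLowerTriangular.mul_blockLowerTriangular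
    {M : Matrix (Fin (T + 1) × Fin n) (Fin (T + 1) × Fin m) ℝ}
    {N : Matrix (Fin (T + 1) × Fin m) (Fin (T + 1) × Fin p) ℝ}
    (hM : StrictBlockLowerTriangular M) (hN : BlockLowerTriangular N) :
    StrictBlockLowerTriangular (M * N) := by
  intro i j a b hij
  rw [mul_apply]
  refine Finset.sum_eq_zero fun ⟨k, c⟩ _ => ?_
  rcases le_or_gt i k with hik | hki
  · rw [hM i k a c hik, zero_mul]
  · rw [hN k j c b (hki.trans_le hij), mul_zero]

theorem StrictBlockLowerTriangular.add
    {M N : Matrix (Fin (T + 1) × Fin n) (Fin (T + 1) × Fin m) ℝ}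
    (hM : StrictBlockLowerTriangular M) (hN : StrictBlockLowerTriangular N) :
    StrictBlockLowerTriangular (M + N) := by
  intro i j a b hij
  rw [Matrix.add_apply, hM i j a b hij, hN i j a b hij, add_zero]

theorem BlockDiagonal.strictBlockLowerTriangular_blockDownshift_mul
    {D : Matrix (Fin (T + 1) × Fin n) (Fin (T + 1) × Fin m) ℝ} (hD : BlockDiagonal D) :
    StrictBlockLowerTriangular (blockDownshift T n * D) := by
  intro i j a b hij
  rw [mul_apply]
  refine Finset.sum_eq_zero fun ⟨k, c⟩ _ => ?_
  by_cases hik : (i : ℕ) = k + 1 ∧ a = c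
  · have hkj : k ≠ j := by rintro rfl; exact absurd (Fin.le_def.mp hij) (by omega)
    rw [hD k j c b hkj, mul_zero]
  · rw [blockDownshift, if_neg hik, zero_mul]

theorem StrictBlockLowerTriangular.blockLowerTriangular_one_add
    {N : Matrix (Fin (T + 1) × Fin n) (Fin (T + 1) × Fin n) ℝ}
    (hN : StrictBlockLowerTriangular N) : BlockLowerTriangular (1 + N) := by
  intro i j a b hij
  rw [Matrix.add_apply, one_apply_ne (by simp [hij.ne]), hN i j a b hij.le, add_zero]

theorem StrictBlockLowerTriangular.det_one_add
    {N : Matrix (Fin (T + 1) × Fin n) (Fin (T + 1) × Fin n) ℝ}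
    (hN : StrictBlockLowerTriangular N) : (1 + N).det = 1 := by
  rw [(blockLowerTriangular_iff_blockTriangular.mp hN.blockLowerTriangular_one_add).det]
  refine Finset.prod_eq_one fun k _ => ?_
  have hblock : (1 + N).toSquareBlock (fun p => toDual p.1) k = 1 := by
    ext ⟨⟨i, a⟩, hi⟩ ⟨⟨j, b⟩, hj⟩
    obtain rfl : i = j := toDual.injective (hi.trans hj.symm)
    simp [toSquareBlock_def, hN i i a b le_rfl, one_apply]
  rw [hblock, det_one]

end BlockLowerTriangular

/-- Finite horizon System Level Synthesis, Theorem 1, statement (2): any block lower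
triangular pair `{Φx, Φu}` satisfying the affine constraint `(I - ZA) Φx - ZB Φu = I`
is achieved by the controller `K = Φu Φx⁻¹`, which is itself block lower triangular;
moreover `I - Z(A + BK)` is invertible with inverse `Φx`, and
`K (I - Z(A + BK))⁻¹ = Φu`. -/
theorem stmt2 (n m T : ℕ)
    (A : Matrix (Fin (T + 1) × Fin n) (Fin (T + 1) × Fin n) ℝ)
    (B : Matrix (Fin (T + 1) × Fin n) (Fin (T + 1) × Fin m) ℝ)
    (Φx : Matrix (Fin (T + 1) × Fin n) (Fin (T + 1) × Fin n) ℝ)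
    (Φu : Matrix (Fin (T + 1) × Fin m) (Fin (T + 1) × Fin n) ℝ)
    (hA : BlockDiagonal A) (hB : BlockDiagonal B)
    (hΦx : BlockLowerTriangular Φx) (hΦu : BlockLowerTriangular Φu)
    (haffine : (1 - blockDownshift T n * A) * Φx - blockDownshift T n * B * Φu = 1) :
    IsUnit Φx ∧
    BlockLowerTriangular (Φu * Φx⁻¹) ∧
    IsUnit (1 - blockDownshift T n * (A + B * (Φu * Φx⁻¹))) ∧
    (1 - blockDownshift T n * (A + B * (Φu * Φx⁻¹)))⁻¹ = Φx ∧
    Φu * Φx⁻¹ * (1 - blockDownshift T n * (A + B * (Φu * Φx⁻¹)))⁻¹ = Φu := by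
  set Z := blockDownshift T n
  have hN : StrictBlockLowerTriangular (Z * A * Φx + Z * B * Φu) :=
    (hA.strictBlockLowerTriangular_blockDownshift_mul.mul_blockLowerTriangular hΦx).add
      (hB.strictBlockLowerTriangular_blockDownshift_mul.mul_blockLowerTriangular hΦu)
  have hΦx_eq : Φx = 1 + (Z * A * Φx + Z * B * Φu) := by
    rw [← haffine]; noncomm_ring
  have hdet : IsUnit Φx.det := by rw [hΦx_eq, hN.det_one_add]; exact isUnit_one
  have : Invertible Φx := invertibleOfIsUnitDet Φx hdet
  have hinv : BlockLowerTriangular Φx⁻¹ := blockLowerTriangular_iff_blockTriangular.mpr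
    (blockTriangular_inv_of_blockTriangular (blockLowerTriangular_iff_blockTriangular.mp hΦx))
  have hK : Φu * Φx⁻¹ * Φx = Φu := nonsing_inv_mul_cancel_right Φx Φu hdet
  have hclosed : (1 - Z * (A + B * (Φu * Φx⁻¹))) * Φx = 1 :=
    calc (1 - Z * (A + B * (Φu * Φx⁻¹))) * Φx
        = (1 - Z * A) * Φx - Z * B * (Φu * Φx⁻¹ * Φx) := by
          simp only [Matrix.sub_mul, Matrix.mul_add, Matrix.mul_assoc, sub_add_eq_sub_sub]
      _ = 1 := by rw [hK, haffine]
  refine ⟨(isUnit_iff_isUnit_det Φx).mpr hdet, hΦu.mul hinv,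
    (isUnit_iff_isUnit_det _).mpr (isUnit_det_of_right_inverse hclosed),
    inv_eq_right_inv hclosed, ?_⟩
  rw [inv_eq_right_inv hclosed, hK]
end

section
/- Fix n, m, T : ℕ. Let A be a block-diagonal real matrix indexed by ι = Fin (T+1) × Fin n, B a block-diagonal real matrix with rows indexed by ι and columns by κ = Fin (T+1) × Fin m, and Z the block-downshift matrix on ι. Let Φx (indexed ι × ι), Φu (indexed κ × ι), and Δ̄ (indexed ι × ι) be block lower triangular real matrices such that for every t ∈ Fin (T+1) the n×n diagonal block of I - Δ̄ at block position (t,t) is invertible, and suppose (I - Z*A) * Φx - Z*B * Φu = I - Δ̄. Then Φx and I - Δ̄ are invertible, and with K := Φu * Φx⁻¹ the matrix I - Z*(A + B*K) is invertible and satisfies (I - Z*(A + B*K))⁻¹ = Φx * (I - Δ̄)⁻¹ and K * (I - Z*(A + B*K))⁻¹ = Φu * (I - Δ̄)⁻¹. -/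
/-- The `n × n` diagonal block of a matrix at block position `(t, t)`. -/
def diagBlock {T n : ℕ}
    (M : Matrix (Fin (T + 1) × Fin n) (Fin (T + 1) × Fin n) ℝ) (t : Fin (T + 1)) :
    Matrix (Fin n) (Fin n) ℝ :=
  Matrix.of fun a b => M (t, a) (t, b)

-- block diagonal times BLT is BLT
lemma bd_mul_blt {T n m : ℕ}
    (A : Matrix (Fin (T+1) × Fin n) (Fin (T+1) × Fin m) ℝ)
    (M : Matrix (Fin (T+1) × Fin m) (Fin (T+1) × Fin n) ℝ)
    (hA : BlockDiagonal A) (hM : BlockLowerTriangular M) :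
    BlockLowerTriangular (A * M) := by
  intro i j a b hij
  rw [Matrix.mul_apply]
  apply Finset.sum_eq_zero
  rintro ⟨k, c⟩ -
  by_cases hk : k = i
  · subst hk
    rw [hM k j c b hij, mul_zero]
  · rw [hA i k a c (Ne.symm hk), zero_mul]

-- Z times BLT is strictly BLT
lemma z_mul_strict {T n : ℕ}
    (M : Matrix (Fin (T+1) × Fin n) (Fin (T+1) × Fin n) ℝ)
    (hM : BlockLowerTriangular M) :
    ∀ (i j : Fin (T+1)) (a b : Fin n), i ≤ j → (blockDownshift T n * M) (i, a) (j, b) = 0 := by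
  intro i j a b hij
  rw [Matrix.mul_apply]
  apply Finset.sum_eq_zero
  rintro ⟨k, c⟩ -
  by_cases h : (i : ℕ) = (k : ℕ) + 1 ∧ a = c
  · have hkj : k < j := by
      have h1 : (i : ℕ) ≤ (j : ℕ) := hij
      have h2 := h.1
      exact Fin.lt_def.mpr (by omega)
    rw [hM k j c b hkj, mul_zero]
  · have : blockDownshift T n (i, a) (k, c) = 0 := if_neg h
    rw [this, zero_mul]

lemma isUnit_of_blt {T n : ℕ}
    {M : Matrix (Fin (T+1) × Fin n) (Fin (T+1) × Fin n) ℝ}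
    (hM : BlockLowerTriangular M) (hd : ∀ t, IsUnit (diagBlock M t)) : IsUnit M := by
  have hbt : M.BlockTriangular (fun p => OrderDual.toDual p.1) := by
    rintro ⟨i, a⟩ ⟨j, b⟩ h
    exact hM i j a b h
  rw [Matrix.isUnit_iff_isUnit_det, hbt.det_fintype, isUnit_iff_ne_zero]
  apply Finset.prod_ne_zero_iff.mpr
  intro t _
  set t' : Fin (T+1) := OrderDual.ofDual t with ht'
  let e : {p : Fin (T+1) × Fin n // (fun p : Fin (T+1) × Fin n => OrderDual.toDual p.1) p = t} ≃ Fin n :=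
    { toFun := fun p => p.1.2
      invFun := fun a => ⟨(t', a), rfl⟩
      left_inv := by
        rintro ⟨⟨i, a⟩, h⟩
        have : i = t' := h
        subst this
        rfl
      right_inv := fun a => rfl }
  have heq : M.toSquareBlock (fun p => OrderDual.toDual p.1) t = (diagBlock M t').submatrix e e := by
    ext p q
    rcases p with ⟨⟨i, a⟩, hp⟩
    rcases q with ⟨⟨j, b⟩, hq⟩
    have hi : i = t' := hp
    have hj : j = t' := hq
    subst hi; subst hj
    rfl
  rw [heq, Matrix.det_submatrix_equiv_self]
  exact (isUnit_iff_ne_zero.mp ((Matrix.isUnit_iff_isUnit_det _).mp (hd t')))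


/-- Robust System Level Synthesis (Theorem 2): if block lower triangular `{Φx, Φu, Δ̄}`
satisfy the perturbed affine constraint `(I - ZA) Φx - ZB Φu = I - Δ̄` and every
diagonal block of `I - Δ̄` is invertible, then `Φx` and `I - Δ̄` are invertible, and the
controller `K = Φu Φx⁻¹` achieves the system responses `Φx (I - Δ̄)⁻¹`, `Φu (I - Δ̄)⁻¹`. -/
theorem stmt3 (n m T : ℕ)
    (A : Matrix (Fin (T + 1) × Fin n) (Fin (T + 1) × Fin n) ℝ)
    (B : Matrix (Fin (T + 1) × Fin n) (Fin (T + 1) × Fin m) ℝ)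
    (Φx : Matrix (Fin (T + 1) × Fin n) (Fin (T + 1) × Fin n) ℝ)
    (Φu : Matrix (Fin (T + 1) × Fin m) (Fin (T + 1) × Fin n) ℝ)
    (Δbar : Matrix (Fin (T + 1) × Fin n) (Fin (T + 1) × Fin n) ℝ)
    (hA : BlockDiagonal A) (hB : BlockDiagonal B)
    (hΦx : BlockLowerTriangular Φx) (hΦu : BlockLowerTriangular Φu)
    (hΔbar : BlockLowerTriangular Δbar)
    (hdiag : ∀ t : Fin (T + 1), IsUnit (diagBlock (1 - Δbar) t))
    (haffine : (1 - blockDownshift T n * A) * Φx - blockDownshift T n * B * Φu = 1 - Δbar) :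
    IsUnit Φx ∧
    IsUnit (1 - Δbar) ∧
    IsUnit (1 - blockDownshift T n * (A + B * (Φu * Φx⁻¹))) ∧
    (1 - blockDownshift T n * (A + B * (Φu * Φx⁻¹)))⁻¹ = Φx * (1 - Δbar)⁻¹ ∧
    Φu * Φx⁻¹ * (1 - blockDownshift T n * (A + B * (Φu * Φx⁻¹)))⁻¹ = Φu * (1 - Δbar)⁻¹ := by
  set Z := blockDownshift T n with hZ
  -- 1 - Δbar is BLT
  have hblt1 : BlockLowerTriangular (1 - Δbar) := by
    intro i j a b hij
    rw [Matrix.sub_apply, Matrix.one_apply_ne (by simp [Prod.ext_iff]; intro h; exact absurd h hij.ne),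
      hΔbar i j a b hij, sub_zero]
  have hΔunit : IsUnit (1 - Δbar) := isUnit_of_blt hblt1 hdiag
  -- decomposition of Φx
  have hexp : Φx = (1 - Δbar) + (Z * (A * Φx) + Z * (B * Φu)) := by
    rw [← haffine]; simp only [Matrix.mul_assoc]; noncomm_ring
  -- diagonal blocks of Φx equal those of 1 - Δbar
  have hdiagΦx : ∀ t, diagBlock Φx t = diagBlock (1 - Δbar) t := by
    intro t
    ext a b
    have h1 : (Z * (A * Φx)) (t, a) (t, b) = 0 :=
      z_mul_strict (A * Φx) (bd_mul_blt A Φx hA hΦx) t t a b le_rfl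
    have h2 : (Z * (B * Φu)) (t, a) (t, b) = 0 :=
      z_mul_strict (B * Φu) (bd_mul_blt B Φu hB hΦu) t t a b le_rfl
    show Φx (t, a) (t, b) = (1 - Δbar) (t, a) (t, b)
    conv_lhs => rw [hexp]
    rw [Matrix.add_apply, Matrix.add_apply, h1, h2, add_zero, add_zero]
  have hxunit : IsUnit Φx := isUnit_of_blt hΦx (fun t => (hdiagΦx t) ▸ hdiag t)
  have hxdet : IsUnit Φx.det := (Matrix.isUnit_iff_isUnit_det _).mp hxunit
  have hΔdet : IsUnit (1 - Δbar).det := (Matrix.isUnit_iff_isUnit_det _).mp hΔunit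
  have hinvx : Φx⁻¹ * Φx = 1 := Matrix.nonsing_inv_mul Φx hxdet
  -- the closed-loop product identity
  have hprod : (1 - Z * (A + B * (Φu * Φx⁻¹))) * Φx = 1 - Δbar := by
    rw [← haffine]
    have hcancel : Z * (B * (Φu * Φx⁻¹)) * Φx = Z * B * Φu := by
      simp only [Matrix.mul_assoc]
      rw [hinvx, Matrix.mul_one]
    rw [sub_mul, one_mul, sub_mul, one_mul, mul_add, add_mul, hcancel]
    simp only [Matrix.mul_assoc]
    abel
  have hKunit : IsUnit (1 - Z * (A + B * (Φu * Φx⁻¹))) := by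
    rw [Matrix.isUnit_iff_isUnit_det]
    have := congrArg Matrix.det hprod
    rw [Matrix.det_mul] at this
    exact isUnit_of_mul_isUnit_left (this ▸ hΔdet)
  have hinv_eq : (1 - Z * (A + B * (Φu * Φx⁻¹)))⁻¹ = Φx * (1 - Δbar)⁻¹ := by
    apply Matrix.inv_eq_right_inv
    rw [← mul_assoc, hprod, Matrix.mul_nonsing_inv _ hΔdet]
  refine ⟨hxunit, hΔunit, hKunit, hinv_eq, ?_⟩
  rw [hinv_eq, Matrix.mul_assoc Φu Φx⁻¹ _, ← Matrix.mul_assoc Φx⁻¹ Φx _, hinvx, Matrix.one_mul]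
end

section
/- Let p1, p2, q1, q2 be finite types and let M11 (p1 × q1), M12 (p1 × q2), M21 (p2 × q1), M22 (p2 × q2) be real matrices. The following are equivalent: (1) for every real matrix Δ1 (q2 × p2) with ‖Δ1‖ ≤ 1, the matrix I - M22*Δ1 is invertible and ‖M11 + M12*Δ1*(I - M22*Δ1)⁻¹*M21‖ < 1; (2) for every pair of real matrices Δ1 (q2 × p2) and Δ2 (q1 × p1) with ‖Δ1‖ ≤ 1 and ‖Δ2‖ ≤ 1, the matrix I - (fromBlocks M11 M12 M21 M22) * (fromBlocks Δ2 0 0 Δ1) is invertible. -/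
/-!
Write `F = M11 + M12 Δ1 (1 - M22 Δ1)⁻¹ M21` for the lower linear fractional transform. Whenever
`1 - M22 Δ1` is invertible, the Schur complement of `1 - M blkdiag(Δ2, Δ1)` with respect to its
lower right block `1 - M22 Δ1` is `1 - F Δ2`, and taking `Δ2 = 0` shows that robust well-posedness
forces `1 - M22 Δ1` to be invertible. So everything reduces to the small-gain fact that
`1 - F Δ` is invertible for every contraction `Δ` iff `‖F‖ < 1`. One direction is the Neumann
series; for the other, a row `i` of `F` with absolute sum `r ≥ 1` gives the rank-one contraction
`Δ = x eᵢᵀ` with `x = sign(F i ·) / r`, and then `F x` is a fixed vector of `F Δ`.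
-/

open Matrix

attribute [local instance] Matrix.linftyOpNormedAddCommGroup

namespace Matrix

theorem isUnit_one_sub_of_linfty_opNorm_lt_one {n : Type*} [Fintype n] [DecidableEq n]
    {X : Matrix n n ℝ} (hX : ‖X‖ < 1) : IsUnit (1 - X) :=
  letI := Matrix.linftyOpNormedRing (n := n) (α := ℝ)
  -- the uniformity of `linftyOpNormedRing` is the product one only up to unfolding
  haveI : @CompleteSpace (Matrix n n ℝ) PseudoMetricSpace.toUniformSpace :=
    (inferInstance : CompleteSpace (Matrix n n ℝ))
  isUnit_one_sub_of_norm_lt_one hX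

theorem not_isUnit_one_sub_replicateCol_mul_replicateRow {m α ι : Type*} [Fintype m]
    [DecidableEq m] [CommRing α] [Nontrivial α] [Unique ι] {u v : m → α} (h : v ⬝ᵥ u = 1) :
    ¬IsUnit (1 - replicateCol ι u * replicateRow ι v) := by
  rw [isUnit_iff_isUnit_det, det_one_sub_mul_comm, det_unique, sub_apply, one_apply_eq,
    replicateRow_mul_replicateCol_apply, h, sub_self]
  exact not_isUnit_zero

section Contraction

variable {m n : Type*} [Fintype m] [Fintype n] {F : Matrix m n ℝ}

theorem exists_one_le_sum_abs_of_one_le_linfty_opNorm (hF : 1 ≤ ‖F‖) :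
    ∃ i, 1 ≤ ∑ j, |F i j| := by
  have : (1 : NNReal) ≤ ‖F‖₊ := by exact_mod_cast hF
  rw [linfty_opNNNorm_def, Finset.le_sup_iff zero_lt_one] at this
  obtain ⟨i, -, hi⟩ := this
  exact ⟨i, by simpa [← NNReal.coe_le_coe] using hi⟩

theorem exists_norm_le_one_mulVec_apply_eq_one (hF : 1 ≤ ‖F‖) :
    ∃ (x : n → ℝ) (i : m), ‖x‖ ≤ 1 ∧ (F *ᵥ x) i = 1 := by
  obtain ⟨i, hi⟩ := exists_one_le_sum_abs_of_one_le_linfty_opNorm hF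
  set r := ∑ j, |F i j|
  have hr : 0 < r := zero_lt_one.trans_le hi
  refine ⟨fun j => SignType.sign (F i j) / r, i, ?_, ?_⟩
  · refine (pi_norm_le_iff_of_nonneg zero_le_one).mpr fun j => ?_
    rw [Real.norm_eq_abs, abs_div, abs_of_pos hr, div_le_one hr]
    refine le_trans ?_ hi
    rcases lt_trichotomy (F i j) 0 with h | h | h <;> simp [h]
  · simp only [mulVec, dotProduct, mul_div, self_mul_sign, ← Finset.sum_div]
    exact div_self hr.ne'

theorem exists_linfty_opNorm_le_one_not_isUnit_one_sub_mul [DecidableEq m] (hF : 1 ≤ ‖F‖) :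
    ∃ Δ : Matrix n m ℝ, ‖Δ‖ ≤ 1 ∧ ¬IsUnit (1 - F * Δ) := by
  obtain ⟨x, i, hx, hFx⟩ := exists_norm_le_one_mulVec_apply_eq_one hF
  refine ⟨replicateCol Unit x * replicateRow Unit (Pi.single i (1 : ℝ)), ?_, ?_⟩
  · calc _ ≤ ‖replicateCol Unit x‖ * ‖replicateRow Unit (Pi.single i (1 : ℝ))‖ :=
          linfty_opNorm_mul _ _
      _ ≤ 1 := by
        rw [linfty_opNorm_replicateCol, linfty_opNorm_replicateRow]
        simpa [Pi.single_apply, apply_ite] using hx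
  · rw [← Matrix.mul_assoc, ← replicateCol_mulVec]
    exact not_isUnit_one_sub_replicateCol_mul_replicateRow (by rw [single_dotProduct, one_mul, hFx])

theorem linfty_opNorm_lt_one_iff_forall_isUnit_one_sub_mul [DecidableEq m] :
    ‖F‖ < 1 ↔ ∀ Δ : Matrix n m ℝ, ‖Δ‖ ≤ 1 → IsUnit (1 - F * Δ) := by
  refine ⟨fun hF Δ hΔ => isUnit_one_sub_of_linfty_opNorm_lt_one ?_, fun h => ?_⟩
  · exact (linfty_opNorm_mul F Δ).trans_lt
      (mul_lt_one_of_nonneg_of_lt_one_left (norm_nonneg F) hF hΔ)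
  · by_contra! hF
    obtain ⟨Δ, hΔ, hsing⟩ := exists_linfty_opNorm_le_one_not_isUnit_one_sub_mul hF
    exact hsing (h Δ hΔ)

end Contraction

noncomputable def lowerLFT {p1 p2 q1 q2 α : Type*} [Fintype p2] [Fintype q2] [DecidableEq p2]
    [CommRing α] (M11 : Matrix p1 q1 α) (M12 : Matrix p1 q2 α) (M21 : Matrix p2 q1 α)
    (M22 : Matrix p2 q2 α) (Δ : Matrix q2 p2 α) : Matrix p1 q1 α :=
  M11 + M12 * Δ * (1 - M22 * Δ)⁻¹ * M21

section BlockDiagonalPerturbation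

variable {p1 p2 q1 q2 α : Type*} [Fintype q1] [Fintype q2] [DecidableEq p1] [DecidableEq p2]
  [CommRing α]

theorem one_sub_fromBlocks_mul_blockDiag (M11 : Matrix p1 q1 α) (M12 : Matrix p1 q2 α)
    (M21 : Matrix p2 q1 α) (M22 : Matrix p2 q2 α) (Δ1 : Matrix q2 p2 α) (Δ2 : Matrix q1 p1 α) :
    1 - fromBlocks M11 M12 M21 M22 * fromBlocks Δ2 0 0 Δ1 =
      fromBlocks (1 - M11 * Δ2) (-(M12 * Δ1)) (-(M21 * Δ2)) (1 - M22 * Δ1) := by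
  rw [fromBlocks_multiply, ← fromBlocks_one, sub_eq_add_neg, fromBlocks_neg, fromBlocks_add]
  simp [sub_eq_add_neg]

variable [Fintype p1] [Fintype p2]

theorem isUnit_one_sub_fromBlocks_mul_blockDiag_zero_iff (M11 : Matrix p1 q1 α)
    (M12 : Matrix p1 q2 α) (M21 : Matrix p2 q1 α) (M22 : Matrix p2 q2 α) (Δ1 : Matrix q2 p2 α) :
    IsUnit (1 - fromBlocks M11 M12 M21 M22 * fromBlocks (0 : Matrix q1 p1 α) 0 0 Δ1) ↔
      IsUnit (1 - M22 * Δ1) := by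
  simp [one_sub_fromBlocks_mul_blockDiag]

theorem isUnit_one_sub_fromBlocks_mul_blockDiag_iff_lowerLFT {M11 : Matrix p1 q1 α}
    {M12 : Matrix p1 q2 α} {M21 : Matrix p2 q1 α} {M22 : Matrix p2 q2 α} {Δ1 : Matrix q2 p2 α}
    (hD : IsUnit (1 - M22 * Δ1)) (Δ2 : Matrix q1 p1 α) :
    IsUnit (1 - fromBlocks M11 M12 M21 M22 * fromBlocks Δ2 0 0 Δ1) ↔
      IsUnit (1 - lowerLFT M11 M12 M21 M22 Δ1 * Δ2) := by
  obtain ⟨_⟩ := hD.nonempty_invertible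
  rw [one_sub_fromBlocks_mul_blockDiag, isUnit_fromBlocks_iff_of_invertible₂₂,
    invOf_eq_nonsing_inv, lowerLFT]
  congr! 1
  simp only [Matrix.add_mul, Matrix.neg_mul, Matrix.mul_neg, neg_neg, Matrix.mul_assoc]
  abel

end BlockDiagonalPerturbation

end Matrix

theorem stmt5_general {p1 p2 q1 q2 : Type*}
    [Fintype p1] [Fintype p2] [Fintype q1] [Fintype q2]
    [DecidableEq p1] [DecidableEq p2]
    (M11 : Matrix p1 q1 ℝ) (M12 : Matrix p1 q2 ℝ)
    (M21 : Matrix p2 q1 ℝ) (M22 : Matrix p2 q2 ℝ) :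
    (∀ Δ1 : Matrix q2 p2 ℝ, ‖Δ1‖ ≤ 1 →
        IsUnit (1 - M22 * Δ1) ∧ ‖M11 + M12 * Δ1 * (1 - M22 * Δ1)⁻¹ * M21‖ < 1) ↔
    (∀ (Δ1 : Matrix q2 p2 ℝ) (Δ2 : Matrix q1 p1 ℝ), ‖Δ1‖ ≤ 1 → ‖Δ2‖ ≤ 1 →
        IsUnit (1 - fromBlocks M11 M12 M21 M22 * fromBlocks Δ2 0 0 Δ1)) := by
  refine ⟨fun h Δ1 Δ2 h1 h2 => ?_, fun h Δ1 h1 => ?_⟩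
  · obtain ⟨hD, hF⟩ := h Δ1 h1
    rw [isUnit_one_sub_fromBlocks_mul_blockDiag_iff_lowerLFT hD]
    exact linfty_opNorm_lt_one_iff_forall_isUnit_one_sub_mul.mp hF Δ2 h2
  · have hD : IsUnit (1 - M22 * Δ1) :=
      (isUnit_one_sub_fromBlocks_mul_blockDiag_zero_iff M11 M12 M21 M22 Δ1).mp
        (h Δ1 0 h1 (by simp))
    refine ⟨hD, linfty_opNorm_lt_one_iff_forall_isUnit_one_sub_mul.mpr fun Δ2 h2 => ?_⟩
    exact (isUnit_one_sub_fromBlocks_mul_blockDiag_iff_lowerLFT hD Δ2).mp (h Δ1 Δ2 h1 h2)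

/-- Proposition 1: robust performance of the lower linear fractional transform of
`M = [[M11, M12], [M21, M22]]` with respect to all contractions `Δ1` is equivalent to
robust well-posedness of `M` against augmented block-diagonal contractions
`blkdiag(Δ2, Δ1)`, in the `ℓ∞ → ℓ∞` induced norm. -/
theorem stmt5 {p1 p2 q1 q2 : Type*}
    [Fintype p1] [Fintype p2] [Fintype q1] [Fintype q2]
    [DecidableEq p1] [DecidableEq p2] [DecidableEq q1] [DecidableEq q2]
    (M11 : Matrix p1 q1 ℝ) (M12 : Matrix p1 q2 ℝ)
    (M21 : Matrix p2 q1 ℝ) (M22 : Matrix p2 q2 ℝ) :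
    (∀ Δ1 : Matrix q2 p2 ℝ, ‖Δ1‖ ≤ 1 →
        IsUnit (1 - M22 * Δ1) ∧ ‖M11 + M12 * Δ1 * (1 - M22 * Δ1)⁻¹ * M21‖ < 1) ↔
    (∀ (Δ1 : Matrix q2 p2 ℝ) (Δ2 : Matrix q1 p1 ℝ), ‖Δ1‖ ≤ 1 → ‖Δ2‖ ≤ 1 →
        IsUnit (1 - fromBlocks M11 M12 M21 M22 * fromBlocks Δ2 0 0 Δ1)) :=
  stmt5_general M11 M12 M21 M22
end

section
/- Let p, q, r be finite types, Φ a real matrix (p × q), P a real matrix (r × p), and let ε ≥ 0 and β > 0 be real numbers satisfying ‖P*Φ‖ + β*ε*‖Φ‖ ≤ β. Then for every real matrix Δ (q × p) with ‖Δ‖ ≤ ε such that I - Φ*Δ is invertible, one has ‖P*Φ + P*Φ*Δ*(I - Φ*Δ)⁻¹*Φ‖ ≤ β. -/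
open Matrix

attribute [local instance] Matrix.linftyOpNormedAddCommGroup

/-! With `M = PΦ + PΦΔ(I - ΦΔ)⁻¹Φ`, the resolvent identity `(I - ΦΔ)⁻¹ = I + (I - ΦΔ)⁻¹ΦΔ` turns `M`
into a solution of the fixed-point equation `M = PΦ + MΔΦ`. Submultiplicativity of the norm then gives
`‖M‖ ≤ ‖PΦ‖ + ‖M‖ε‖Φ‖`, and the hypothesis `‖PΦ‖ + βε‖Φ‖ ≤ β` forces `ε‖Φ‖ < 1` unless `PΦ = 0`,
so `‖M‖ ≤ ‖PΦ‖ / (1 - ε‖Φ‖) ≤ β`. -/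

theorem Matrix.add_mul_nonsing_inv_mul_eq_add_mul_mul {p q r R : Type*} [Fintype p] [Fintype q]
    [DecidableEq p] [CommRing R] (N : Matrix r q R) (Φ : Matrix p q R) (Δ : Matrix q p R)
    (h : IsUnit (1 - Φ * Δ)) :
    N + N * Δ * (1 - Φ * Δ)⁻¹ * Φ = N + (N + N * Δ * (1 - Φ * Δ)⁻¹ * Φ) * Δ * Φ := by
  set X := (1 - Φ * Δ)⁻¹
  have hX : X = 1 + X * (Φ * Δ) := by
    have := nonsing_inv_mul (1 - Φ * Δ) ((isUnit_iff_isUnit_det _).mp h)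
    rwa [mul_sub, mul_one, sub_eq_iff_eq_add] at this
  nth_rewrite 1 [hX]
  simp only [Matrix.mul_add, Matrix.add_mul, Matrix.mul_one, Matrix.mul_assoc]

theorem Matrix.linfty_opNorm_le_of_eq_add_mul_mul {p q r α : Type*} [Fintype p] [Fintype q]
    [Fintype r] [NonUnitalNormedRing α] {M N : Matrix r q α} {Φ : Matrix p q α}
    {Δ : Matrix q p α} (hM : M = N + M * Δ * Φ) :
    ‖M‖ ≤ ‖N‖ + ‖M‖ * ‖Δ‖ * ‖Φ‖ :=
  calc ‖M‖ = ‖N + M * Δ * Φ‖ := congrArg _ hM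
    _ ≤ ‖N‖ + ‖M * Δ * Φ‖ := norm_add_le _ _
    _ ≤ ‖N‖ + ‖M‖ * ‖Δ‖ * ‖Φ‖ := by
      gcongr
      exact (linfty_opNorm_mul _ _).trans (by gcongr; exact linfty_opNorm_mul _ _)

theorem le_of_le_add_mul_of_add_mul_le {m a c β : ℝ} (hm : m ≤ a + m * c) (ha : 0 < a)
    (hβ : 0 < β) (h : a + β * c ≤ β) : m ≤ β := by
  have hc : 0 < 1 - c := pos_of_mul_pos_right (by linarith) hβ.le
  exact le_of_mul_le_mul_right (by linarith) hc

theorem stmt6_general {p q r : Type*} [Fintype p] [Fintype q] [Fintype r]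
    [DecidableEq p]
    (Φ : Matrix p q ℝ) (P : Matrix r p ℝ) (ε β : ℝ)
    (hβ : 0 < β)
    (hcond : ‖P * Φ‖ + β * ε * ‖Φ‖ ≤ β) :
    ∀ Δ : Matrix q p ℝ, ‖Δ‖ ≤ ε → IsUnit (1 - Φ * Δ) →
      ‖P * Φ + P * Φ * Δ * (1 - Φ * Δ)⁻¹ * Φ‖ ≤ β := by
  intro Δ hΔ hU
  rcases eq_or_ne (P * Φ) 0 with hPΦ | hPΦ
  · simpa [hPΦ] using hβ.le
  have hM := linfty_opNorm_le_of_eq_add_mul_mul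
    (add_mul_nonsing_inv_mul_eq_add_mul_mul (P * Φ) Φ Δ hU)
  refine le_of_le_add_mul_of_add_mul_le (c := ε * ‖Φ‖) ?_ (norm_pos_iff.mpr hPΦ) hβ
    (by rwa [← mul_assoc])
  rw [← mul_assoc]
  exact hM.trans (by gcongr)

/-- Theorem 3: the convex condition `‖PΦ‖ + βε‖Φ‖ ≤ β` is sufficient for the robust
norm bound `‖PΦ + PΦΔ(I - ΦΔ)⁻¹Φ‖ ≤ β` to hold for every perturbation `Δ` with
`‖Δ‖ ≤ ε` (in the `ℓ∞ → ℓ∞` induced norm). -/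
theorem stmt6 {p q r : Type*} [Fintype p] [Fintype q] [Fintype r]
    [DecidableEq p] [DecidableEq q]
    (Φ : Matrix p q ℝ) (P : Matrix r p ℝ) (ε β : ℝ)
    (hε : 0 ≤ ε) (hβ : 0 < β)
    (hcond : ‖P * Φ‖ + β * ε * ‖Φ‖ ≤ β) :
    ∀ Δ : Matrix q p ℝ, ‖Δ‖ ≤ ε → IsUnit (1 - Φ * Δ) →
      ‖P * Φ + P * Φ * Δ * (1 - Φ * Δ)⁻¹ * Φ‖ ≤ β :=
  stmt6_general Φ P ε β hβ hcond
end

section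
/- Let p1, p2, q be finite types and X (p1 × q), Y (p2 × q) real matrices with ‖X‖ + ‖Y‖ < 1. Then for every real matrix Δ1 (q × p2) with ‖Δ1‖ ≤ 1, the matrix I - Y*Δ1 is invertible and ‖X + X*Δ1*(I - Y*Δ1)⁻¹*Y‖ < 1. -/
/-!
Since `‖Y Δ1‖ ≤ ‖Y‖ < 1`, the Neumann series inverts `1 - Y Δ1` with
`‖(1 - Y Δ1)⁻¹‖ ≤ (1 - ‖Y‖)⁻¹`. Submultiplicativity of the `ℓ∞` operator norm then bounds the
transform by `‖X‖ + ‖X‖ ‖Y‖ / (1 - ‖Y‖) = ‖X‖ / (1 - ‖Y‖)`, which is `< 1` exactly when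
`‖X‖ + ‖Y‖ < 1`.
-/

open Matrix

attribute [local instance] Matrix.linftyOpNormedAddCommGroup
attribute [local instance] Matrix.linftyOpNormedRing

theorem norm_inverse_one_sub_le {R : Type*} [NormedRing R] [HasSummableGeomSeries R] {t : R}
    (h1 : ‖(1 : R)‖ ≤ 1) (ht : ‖t‖ < 1) : ‖Ring.inverse (1 - t)‖ ≤ (1 - ‖t‖)⁻¹ := by
  rw [← geom_series_eq_inverse t ht]
  linarith [tsum_geometric_le_of_norm_lt_one t ht]

namespace Matrix

variable {k l m n o α : Type*} [Fintype k] [Fintype l] [Fintype m] [Fintype n] [Fintype o]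

theorem linfty_opNorm_mul_mul_mul_le [NonUnitalNormedRing α] (A : Matrix k l α)
    (B : Matrix l m α) (C : Matrix m n α) (D : Matrix n o α) :
    ‖A * B * C * D‖ ≤ ‖A‖ * ‖B‖ * ‖C‖ * ‖D‖ :=
  calc ‖A * B * C * D‖ ≤ ‖A * B * C‖ * ‖D‖ := linfty_opNorm_mul _ _
    _ ≤ ‖A * B‖ * ‖C‖ * ‖D‖ := by gcongr; exact linfty_opNorm_mul _ _
    _ ≤ ‖A‖ * ‖B‖ * ‖C‖ * ‖D‖ := by gcongr; exact linfty_opNorm_mul _ _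

variable [DecidableEq n]

theorem linfty_opNorm_one_le [NormedRing α] [NormOneClass α] :
    ‖(1 : Matrix n n α)‖ ≤ 1 := by
  rw [← diagonal_one, linfty_opNorm_diagonal]
  exact pi_norm_le_iff_of_nonneg zero_le_one |>.2 fun _ => norm_one.le

-- The norm of `Matrix.linftyOpNormedRing` induces the product uniformity.
instance linftyOp_hasSummableGeomSeries [NormedRing α] [CompleteSpace α] :
    HasSummableGeomSeries (Matrix n n α) :=
  have : @CompleteSpace (Matrix n n α) PseudoMetricSpace.toUniformSpace :=
    inferInstanceAs (CompleteSpace (n → n → α))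
  inferInstance

theorem linfty_opNorm_inv_one_sub_le [NormedCommRing α] [NormOneClass α] [CompleteSpace α]
    {A : Matrix n n α} (hA : ‖A‖ < 1) : ‖(1 - A)⁻¹‖ ≤ (1 - ‖A‖)⁻¹ := by
  rw [nonsing_inv_eq_ringInverse]
  exact norm_inverse_one_sub_le (linfty_opNorm_one_le (α := α)) hA

end Matrix

theorem stmt7_general {p1 p2 q : Type*} [Fintype p1] [Fintype p2] [Fintype q]
    [DecidableEq p2]
    (X : Matrix p1 q ℝ) (Y : Matrix p2 q ℝ)
    (hXY : ‖X‖ + ‖Y‖ < 1) :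
    ∀ Δ1 : Matrix q p2 ℝ, ‖Δ1‖ ≤ 1 →
      IsUnit (1 - Y * Δ1) ∧ ‖X + X * Δ1 * (1 - Y * Δ1)⁻¹ * Y‖ < 1 := by
  intro Δ1 hΔ1
  have hY : 0 < 1 - ‖Y‖ := by linarith [norm_nonneg X]
  have hYΔ1 : ‖Y * Δ1‖ ≤ ‖Y‖ :=
    (linfty_opNorm_mul Y Δ1).trans (mul_le_of_le_one_right (norm_nonneg Y) hΔ1)
  have hYΔ1_lt : ‖Y * Δ1‖ < 1 := by linarith
  have hinv : ‖(1 - Y * Δ1)⁻¹‖ ≤ (1 - ‖Y‖)⁻¹ :=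
    (linfty_opNorm_inv_one_sub_le hYΔ1_lt).trans (inv_anti₀ hY (by linarith))
  refine ⟨isUnit_one_sub_of_norm_lt_one hYΔ1_lt, ?_⟩
  calc ‖X + X * Δ1 * (1 - Y * Δ1)⁻¹ * Y‖
      ≤ ‖X‖ + ‖X‖ * ‖Δ1‖ * ‖(1 - Y * Δ1)⁻¹‖ * ‖Y‖ :=
        norm_add_le_of_le le_rfl (linfty_opNorm_mul_mul_mul_le _ _ _ _)
    _ ≤ ‖X‖ + ‖X‖ * 1 * (1 - ‖Y‖)⁻¹ * ‖Y‖ := by gcongr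
    _ = ‖X‖ / (1 - ‖Y‖) := by field_simp; ring
    _ < 1 := (div_lt_one hY).2 (by linarith)

/-- Implication (26) from the proof of Theorem 3: if `‖X‖ + ‖Y‖ < 1`, then for every
contraction `Δ1` (in the `ℓ∞ → ℓ∞` induced norm), `I - Y Δ1` is invertible and
`‖X + X Δ1 (I - Y Δ1)⁻¹ Y‖ < 1`. -/
theorem stmt7 {p1 p2 q : Type*} [Fintype p1] [Fintype p2] [Fintype q]
    [DecidableEq p2] [DecidableEq q]
    (X : Matrix p1 q ℝ) (Y : Matrix p2 q ℝ)
    (hXY : ‖X‖ + ‖Y‖ < 1) :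
    ∀ Δ1 : Matrix q p2 ℝ, ‖Δ1‖ ≤ 1 →
      IsUnit (1 - Y * Δ1) ∧ ‖X + X * Δ1 * (1 - Y * Δ1)⁻¹ * Y‖ < 1 :=
  stmt7_general X Y hXY
end

section
/- Let p1, p2, q be finite types and X (p1 × q), Y (p2 × q) real matrices with ‖X‖ + ‖Y‖ < 1. Then for every pair of real matrices Δ1 (q × p1) and Δ2 (q × p2) with ‖Δ1‖ ≤ 1 and ‖Δ2‖ ≤ 1, the matrix I - (fromBlocks X X Y Y) * (fromBlocks Δ1 0 0 Δ2) is invertible. -/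
open Matrix

attribute [local instance] Matrix.linftyOpNormedAddCommGroup

/-- Robust well-posedness via diagonal scaling (from the proof of Theorem 3):
if `‖X‖ + ‖Y‖ < 1` then for all contractions `Δ1, Δ2` (in the `ℓ∞ → ℓ∞` induced norm),
the matrix `I - [[X, X], [Y, Y]] * blkdiag(Δ1, Δ2)` is invertible. -/
theorem stmt8 {p1 p2 q : Type*} [Fintype p1] [Fintype p2] [Fintype q]
    [DecidableEq p1] [DecidableEq p2]
    (X : Matrix p1 q ℝ) (Y : Matrix p2 q ℝ)
    (hXY : ‖X‖ + ‖Y‖ < 1) :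
    ∀ (Δ1 : Matrix q p1 ℝ) (Δ2 : Matrix q p2 ℝ), ‖Δ1‖ ≤ 1 → ‖Δ2‖ ≤ 1 →
      IsUnit (1 - fromBlocks X X Y Y * fromBlocks Δ1 0 0 Δ2) := by
  intro Δ1 Δ2 h1 h2
  rw [Matrix.isUnit_iff_isUnit_det, isUnit_iff_ne_zero]
  intro hdet
  obtain ⟨v, hv, hMv⟩ := (Matrix.exists_mulVec_eq_zero_iff).mpr hdet
  rw [sub_mulVec, one_mulVec, sub_eq_zero] at hMv
  set v1 : p1 → ℝ := v ∘ Sum.inl with hv1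
  set v2 : p2 → ℝ := v ∘ Sum.inr with hv2
  have hΔ : (fromBlocks Δ1 0 0 Δ2) *ᵥ v = Sum.elim (Δ1 *ᵥ v1) (Δ2 *ᵥ v2) := by
    rw [fromBlocks_mulVec]
    simp [hv1, hv2]
  have hM : v = Sum.elim (X *ᵥ (Δ1 *ᵥ v1 + Δ2 *ᵥ v2)) (Y *ᵥ (Δ1 *ᵥ v1 + Δ2 *ᵥ v2)) := by
    conv_lhs => rw [hMv]
    rw [← Matrix.mulVec_mulVec, hΔ, fromBlocks_mulVec]
    simp [Matrix.mulVec_add]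
  have heq1 : v1 = X *ᵥ (Δ1 *ᵥ v1 + Δ2 *ᵥ v2) := by
    funext i; exact congrFun hM (Sum.inl i)
  have heq2 : v2 = Y *ᵥ (Δ1 *ᵥ v1 + Δ2 *ᵥ v2) := by
    funext i; exact congrFun hM (Sum.inr i)
  have hw : ‖Δ1 *ᵥ v1 + Δ2 *ᵥ v2‖ ≤ ‖v1‖ + ‖v2‖ := by
    calc ‖Δ1 *ᵥ v1 + Δ2 *ᵥ v2‖ ≤ ‖Δ1 *ᵥ v1‖ + ‖Δ2 *ᵥ v2‖ := norm_add_le _ _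
    _ ≤ ‖Δ1‖ * ‖v1‖ + ‖Δ2‖ * ‖v2‖ :=
        add_le_add (Matrix.linfty_opNorm_mulVec _ _) (Matrix.linfty_opNorm_mulVec _ _)
    _ ≤ 1 * ‖v1‖ + 1 * ‖v2‖ :=
        add_le_add (mul_le_mul_of_nonneg_right h1 (norm_nonneg _))
          (mul_le_mul_of_nonneg_right h2 (norm_nonneg _))
    _ = ‖v1‖ + ‖v2‖ := by ring
  have hb1 : ‖v1‖ ≤ ‖X‖ * (‖v1‖ + ‖v2‖) := by
    conv_lhs => rw [congrArg norm heq1]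
    exact (Matrix.linfty_opNorm_mulVec _ _).trans
      (mul_le_mul_of_nonneg_left hw (norm_nonneg _))
  have hb2 : ‖v2‖ ≤ ‖Y‖ * (‖v1‖ + ‖v2‖) := by
    conv_lhs => rw [congrArg norm heq2]
    exact (Matrix.linfty_opNorm_mulVec _ _).trans
      (mul_le_mul_of_nonneg_left hw (norm_nonneg _))
  have hs : ‖v1‖ + ‖v2‖ ≤ (‖X‖ + ‖Y‖) * (‖v1‖ + ‖v2‖) := by
    calc ‖v1‖ + ‖v2‖ ≤ ‖X‖ * (‖v1‖ + ‖v2‖) + ‖Y‖ * (‖v1‖ + ‖v2‖) := add_le_add hb1 hb2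
    _ = (‖X‖ + ‖Y‖) * (‖v1‖ + ‖v2‖) := by ring
  have hs0 : ‖v1‖ + ‖v2‖ = 0 := by
    by_contra hne
    have hpos : 0 < ‖v1‖ + ‖v2‖ :=
      lt_of_le_of_ne (add_nonneg (norm_nonneg _) (norm_nonneg _)) (Ne.symm hne)
    have := hs.trans_lt (by nlinarith : (‖X‖ + ‖Y‖) * (‖v1‖ + ‖v2‖) < ‖v1‖ + ‖v2‖)
    exact lt_irrefl _ this
  have h10 : v1 = 0 := norm_eq_zero.mp (by nlinarith [norm_nonneg v1, norm_nonneg v2])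
  have h20 : v2 = 0 := norm_eq_zero.mp (by nlinarith [norm_nonneg v1, norm_nonneg v2])
  apply hv
  funext i
  cases i with
  | inl i => exact congrFun h10 i
  | inr i => exact congrFun h20 i
end

section
/- Let p, q be finite types, Φ a real matrix (p × q), Δ a real matrix (q × p), f : p → ℝ, v : p → ℝ, N : ℕ, and τ, γ : ℝ. Suppose (Φ*Δ)^(N+1) = 0, ‖Δ*Φ‖ ≤ τ, and ‖Δ.mulVec v‖∞ ≤ γ. Then I - Φ*Δ is invertible and f ⬝ᵥ ((Φ*Δ*(I - Φ*Δ)⁻¹).mulVec v) ≤ ‖Φᵀ.mulVec f‖₁ * (Σ_{k=0}^{N-1} τ^k) * γ. -/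
open Matrix Finset

attribute [local instance] Matrix.linftyOpNormedAddCommGroup

/-! Since `ΦΔ` is nilpotent, `ΦΔ (I - ΦΔ)⁻¹` is the finite Neumann sum `∑_{k<N} (ΦΔ)^(k+1)`.
Each term satisfies `fᵀ (ΦΔ)^(k+1) v = (Φᵀ f) ⬝ (ΔΦ)^k Δ v`, and by Hölder's inequality and
submultiplicativity of the `ℓ∞` operator norm this is at most `‖Φᵀ f‖₁ τ^k γ`. -/

theorem Matrix.mul_inv_one_sub_eq_sum_of_pow_eq_zero {n α : Type*} [Fintype n] [DecidableEq n]
    [CommRing α] {M : Matrix n n α} {N : ℕ} (hM : M ^ (N + 1) = 0) :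
    M * (1 - M)⁻¹ = ∑ k ∈ range N, M ^ (k + 1) := by
  have hright : (1 - M) * ∑ k ∈ range (N + 1), M ^ k = 1 := by
    rw [mul_neg_geom_sum, hM, sub_zero]
  simp only [inv_eq_right_inv hright, mul_sum, ← pow_succ']
  rw [sum_range_succ, hM, add_zero]

theorem Matrix.norm_mulVec_pow_mulVec_le {m n α : Type*} [Fintype m] [Fintype n] [DecidableEq m]
    [NormedRing α] (A : Matrix m n α) (B : Matrix n m α) (v : m → α) {τ γ : ℝ}
    (hτ : ‖B * A‖ ≤ τ) (hγ : ‖B *ᵥ v‖ ≤ γ) (k : ℕ) :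
    ‖B *ᵥ ((A * B) ^ k *ᵥ v)‖ ≤ τ ^ k * γ := by
  induction k with
  | zero => simpa using hγ
  | succ k ih =>
    have hshift : B *ᵥ ((A * B) ^ (k + 1) *ᵥ v) = (B * A) *ᵥ (B *ᵥ ((A * B) ^ k *ᵥ v)) := by
      simp only [pow_succ', mulVec_mulVec, Matrix.mul_assoc]
    calc ‖B *ᵥ ((A * B) ^ (k + 1) *ᵥ v)‖
        ≤ ‖B * A‖ * ‖B *ᵥ ((A * B) ^ k *ᵥ v)‖ := hshift ▸ linfty_opNorm_mulVec _ _
      _ ≤ τ * (τ ^ k * γ) := by gcongr; exact (norm_nonneg _).trans hτ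
      _ = τ ^ (k + 1) * γ := by ring

theorem dotProduct_le_sum_abs_mul_norm {ι : Type*} [Fintype ι] (u w : ι → ℝ) :
    u ⬝ᵥ w ≤ (∑ i, |u i|) * ‖w‖ := by
  rw [sum_mul]
  refine sum_le_sum fun i _ => ?_
  calc u i * w i ≤ |u i| * |w i| := (le_abs_self _).trans (abs_mul _ _).le
    _ ≤ |u i| * ‖w‖ := by gcongr; exact norm_le_pi_norm w i

theorem stmt13_general {p q : Type*} [Fintype p] [Fintype q] [DecidableEq p]
    (Φ : Matrix p q ℝ) (Δ : Matrix q p ℝ) (f v : p → ℝ) (N : ℕ) (τ γ : ℝ)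
    (hnil : (Φ * Δ) ^ (N + 1) = 0)
    (hτ : ‖Δ * Φ‖ ≤ τ)
    (hγ : ‖Δ.mulVec v‖ ≤ γ) :
    IsUnit (1 - Φ * Δ) ∧
    f ⬝ᵥ (Φ * Δ * (1 - Φ * Δ)⁻¹).mulVec v ≤
      (∑ i, |Φᵀ.mulVec f i|) * (∑ k ∈ Finset.range N, τ ^ k) * γ := by
  refine ⟨IsNilpotent.isUnit_one_sub ⟨N + 1, hnil⟩, ?_⟩
  have hterm (k : ℕ) : f ⬝ᵥ ((Φ * Δ) ^ (k + 1) *ᵥ v) ≤ (∑ i, |(Φᵀ *ᵥ f) i|) * (τ ^ k * γ) := by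
    have hshift : f ⬝ᵥ ((Φ * Δ) ^ (k + 1) *ᵥ v) = Φᵀ *ᵥ f ⬝ᵥ (Δ *ᵥ ((Φ * Δ) ^ k *ᵥ v)) := by
      rw [pow_succ', ← mulVec_mulVec, ← mulVec_mulVec, dotProduct_mulVec, mulVec_transpose]
    rw [hshift]
    exact (dotProduct_le_sum_abs_mul_norm _ _).trans <| by
      gcongr
      exact norm_mulVec_pow_mulVec_le Φ Δ v hτ hγ k
  calc f ⬝ᵥ (Φ * Δ * (1 - Φ * Δ)⁻¹) *ᵥ v
      = ∑ k ∈ range N, f ⬝ᵥ ((Φ * Δ) ^ (k + 1) *ᵥ v) := by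
        rw [mul_inv_one_sub_eq_sum_of_pow_eq_zero hnil, sum_mulVec, dotProduct_sum]
    _ ≤ ∑ k ∈ range N, (∑ i, |(Φᵀ *ᵥ f) i|) * (τ ^ k * γ) := sum_le_sum fun k _ => hterm k
    _ = (∑ i, |(Φᵀ *ᵥ f) i|) * (∑ k ∈ range N, τ ^ k) * γ := by
      rw [← mul_sum, ← sum_mul, mul_assoc]

/-- Inequality (24), the bound on term ② in the proof of Theorem 4: if `(ΦΔ)^(N+1) = 0`,
`‖ΔΦ‖ ≤ τ` (in the `ℓ∞ → ℓ∞` induced norm) and `‖Δ v‖∞ ≤ γ`, then `I - ΦΔ` is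
invertible and `fᵀ ΦΔ(I - ΦΔ)⁻¹ v ≤ ‖Φᵀ f‖₁ (∑_{k<N} τ^k) γ`. -/
theorem stmt13 {p q : Type*} [Fintype p] [Fintype q] [DecidableEq p] [DecidableEq q]
    (Φ : Matrix p q ℝ) (Δ : Matrix q p ℝ) (f v : p → ℝ) (N : ℕ) (τ γ : ℝ)
    (hnil : (Φ * Δ) ^ (N + 1) = 0)
    (hτ : ‖Δ * Φ‖ ≤ τ)
    (hγ : ‖Δ.mulVec v‖ ≤ γ) :
    IsUnit (1 - Φ * Δ) ∧
    f ⬝ᵥ (Φ * Δ * (1 - Φ * Δ)⁻¹).mulVec v ≤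
      (∑ i, |Φᵀ.mulVec f i|) * (∑ k ∈ Finset.range N, τ ^ k) * γ :=
  stmt13_general Φ Δ f v N τ γ hnil hτ hγ
end

section
/- Let q, px, pu, s be finite types and ΔA (q × px), ΔB (q × pu), Φx (px × s), Φu (pu × s) real matrices. Let εA > 0, εB > 0, and α ∈ (0,1) be real numbers with ‖ΔA‖ ≤ εA and ‖ΔB‖ ≤ εB. Then ‖ΔA*Φx + ΔB*Φu‖ ≤ max ((εA/α) * ‖Φx‖) ((εB/(1-α)) * ‖Φu‖). -/
open Matrix

attribute [local instance] Matrix.linftyOpNormedAddCommGroup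

/-- Inequality (25) from the proof of Theorem 4: if `‖ΔA‖ ≤ εA` and `‖ΔB‖ ≤ εB`
(in the `ℓ∞ → ℓ∞` induced norm), then for any splitting parameter `α ∈ (0,1)`,
`‖ΔA Φx + ΔB Φu‖ ≤ max ((εA/α) ‖Φx‖) ((εB/(1-α)) ‖Φu‖)`. -/
theorem stmt14 {q px pu s : Type*} [Fintype q] [Fintype px] [Fintype pu] [Fintype s]
    (ΔA : Matrix q px ℝ) (ΔB : Matrix q pu ℝ)
    (Φx : Matrix px s ℝ) (Φu : Matrix pu s ℝ)
    (εA εB α : ℝ) (hεA : 0 < εA) (hεB : 0 < εB) (hα0 : 0 < α) (hα1 : α < 1)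
    (hΔA : ‖ΔA‖ ≤ εA) (hΔB : ‖ΔB‖ ≤ εB) :
    ‖ΔA * Φx + ΔB * Φu‖ ≤ max (εA / α * ‖Φx‖) (εB / (1 - α) * ‖Φu‖) := by
  have h1 : ‖ΔA * Φx + ΔB * Φu‖ ≤ ‖ΔA‖ * ‖Φx‖ + ‖ΔB‖ * ‖Φu‖ :=
    le_trans (norm_add_le _ _)
      (add_le_add (Matrix.linfty_opNorm_mul _ _) (Matrix.linfty_opNorm_mul _ _))
  have h2 : ‖ΔA‖ * ‖Φx‖ + ‖ΔB‖ * ‖Φu‖ ≤ εA * ‖Φx‖ + εB * ‖Φu‖ :=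
    add_le_add (mul_le_mul_of_nonneg_right hΔA (norm_nonneg _))
      (mul_le_mul_of_nonneg_right hΔB (norm_nonneg _))
  refine le_trans (le_trans h1 h2) ?_
  have key : εA * ‖Φx‖ + εB * ‖Φu‖
      = α * (εA / α * ‖Φx‖) + (1 - α) * (εB / (1 - α) * ‖Φu‖) := by
    have h1 : α ≠ 0 := ne_of_gt hα0
    have h2 : (1 - α) ≠ 0 := by linarith
    field_simp
  rw [key]
  have hM1 : εA / α * ‖Φx‖ ≤ max (εA / α * ‖Φx‖) (εB / (1 - α) * ‖Φu‖) := le_max_left _ _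
  have hM2 : εB / (1 - α) * ‖Φu‖ ≤ max (εA / α * ‖Φx‖) (εB / (1 - α) * ‖Φu‖) := le_max_right _ _
  nlinarith [hM1, hM2, hα0, hα1]
end

section
/- Let q, px, pu, s be finite types, ΔA (q × px), ΔB (q × pu), Φx (px × s), Φu (pu × s) real matrices, and x0 : s → ℝ. Let εA > 0, εB > 0, and α ∈ (0,1) be real numbers with ‖ΔA‖ ≤ εA and ‖ΔB‖ ≤ εB. Then ‖(ΔA*Φx + ΔB*Φu).mulVec x0‖∞ ≤ max ((εA/α) * ‖Φx.mulVec x0‖∞) ((εB/(1-α)) * ‖Φu.mulVec x0‖∞). -/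
open Matrix

attribute [local instance] Matrix.linftyOpNormedAddCommGroup

/-- Vector analogue of inequality (25) from the proof of Theorem 4: if `‖ΔA‖ ≤ εA` and
`‖ΔB‖ ≤ εB` (in the `ℓ∞ → ℓ∞` induced norm), then for any splitting parameter
`α ∈ (0,1)`,
`‖(ΔA Φx + ΔB Φu) x₀‖∞ ≤ max ((εA/α) ‖Φx x₀‖∞) ((εB/(1-α)) ‖Φu x₀‖∞)`. -/
theorem stmt15 {q px pu s : Type*} [Fintype q] [Fintype px] [Fintype pu] [Fintype s]
    (ΔA : Matrix q px ℝ) (ΔB : Matrix q pu ℝ)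
    (Φx : Matrix px s ℝ) (Φu : Matrix pu s ℝ) (x0 : s → ℝ)
    (εA εB α : ℝ) (hεA : 0 < εA) (hεB : 0 < εB) (hα0 : 0 < α) (hα1 : α < 1)
    (hΔA : ‖ΔA‖ ≤ εA) (hΔB : ‖ΔB‖ ≤ εB) :
    ‖(ΔA * Φx + ΔB * Φu).mulVec x0‖ ≤
      max (εA / α * ‖Φx.mulVec x0‖) (εB / (1 - α) * ‖Φu.mulVec x0‖) := by
  have h1 : ‖(ΔA * Φx + ΔB * Φu).mulVec x0‖ ≤ εA * ‖Φx.mulVec x0‖ + εB * ‖Φu.mulVec x0‖ := by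
    rw [add_mulVec, ← mulVec_mulVec, ← mulVec_mulVec]
    refine (norm_add_le _ _).trans (add_le_add ?_ ?_)
    · exact (Matrix.linfty_opNorm_mulVec _ _).trans
        (mul_le_mul_of_nonneg_right hΔA (norm_nonneg _))
    · exact (Matrix.linfty_opNorm_mulVec _ _).trans
        (mul_le_mul_of_nonneg_right hΔB (norm_nonneg _))
  refine h1.trans ?_
  have h2 : εA * ‖Φx.mulVec x0‖ = α * (εA / α * ‖Φx.mulVec x0‖) := by
    field_simp
  have hne : (1:ℝ) - α ≠ 0 := by linarith
  have h3 : εB * ‖Φu.mulVec x0‖ = (1 - α) * (εB / (1 - α) * ‖Φu.mulVec x0‖) := by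
    field_simp
  rw [h2, h3]
  have := le_max_left (εA / α * ‖Φx.mulVec x0‖) (εB / (1 - α) * ‖Φu.mulVec x0‖)
  have := le_max_right (εA / α * ‖Φx.mulVec x0‖) (εB / (1 - α) * ‖Φu.mulVec x0‖)
  nlinarith [le_max_left (εA / α * ‖Φx.mulVec x0‖) (εB / (1 - α) * ‖Φu.mulVec x0‖),
    le_max_right (εA / α * ‖Φx.mulVec x0‖) (εB / (1 - α) * ‖Φu.mulVec x0‖)]
end

section
/- Let p, q, s be finite types, G a real matrix (p × q), H a real matrix (p × s), f : p → ℝ, x0 : s → ℝ, N : ℕ, and b, σw, γ, τ, ε, β real numbers with β > 0 and σw ≥ 0. Suppose the two convex conditions hold: (i) f ⬝ᵥ (H.mulVec x0) + ‖Gᵀ.mulVec f‖₁ * (Σ_{k=0}^{N-1} τ^k) * γ + β*σw ≤ b, and (ii) ‖Gᵀ.mulVec f‖₁ + β*ε*‖G‖ ≤ β. Then for every real matrix Δ (q × p) satisfying ‖Δ‖ ≤ ε, (G*Δ)^(N+1) = 0, ‖Δ*G‖ ≤ τ, and ‖Δ.mulVec (H.mulVec x0)‖∞ ≤ γ, and for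 every w̃ : q → ℝ with ‖w̃‖∞ ≤ σw, the matrix I - G*Δ is invertible and, writing v := H.mulVec x0 + G.mulVec w̃ for the nominal response, f ⬝ᵥ (v + (G*Δ*(I - G*Δ)⁻¹).mulVec v) ≤ b. -/
open Matrix

attribute [local instance] Matrix.linftyOpNormedAddCommGroup

section AuxLemmasForStmt16

lemma aux_abs_dot_le {p : Type*} [Fintype p] (g z : p → ℝ) :
    |g ⬝ᵥ z| ≤ (∑ i, |g i|) * ‖z‖ := by
  calc |∑ i, g i * z i| ≤ ∑ i, |g i * z i| := Finset.abs_sum_le_sum_abs _ _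
    _ ≤ ∑ i, |g i| * ‖z‖ := by
        refine Finset.sum_le_sum fun i _ => ?_
        rw [abs_mul]
        exact mul_le_mul_of_nonneg_left (norm_le_pi_norm z i) (abs_nonneg _)
    _ = _ := (Finset.sum_mul ..).symm

lemma aux_pow_mulVec_norm_le {q : Type*} [Fintype q] [DecidableEq q]
    (M : Matrix q q ℝ) (c : ℝ) (hM : ‖M‖ ≤ c) (k : ℕ) (z : q → ℝ) :
    ‖(M ^ k).mulVec z‖ ≤ c ^ k * ‖z‖ := by
  induction k with
  | zero => simp
  | succ k ih =>
    have hc : 0 ≤ c := le_trans (norm_nonneg M) hM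
    rw [pow_succ', ← Matrix.mulVec_mulVec]
    calc ‖M.mulVec ((M ^ k).mulVec z)‖ ≤ ‖M‖ * ‖(M ^ k).mulVec z‖ :=
          Matrix.linfty_opNorm_mulVec _ _
      _ ≤ c * (c ^ k * ‖z‖) :=
          mul_le_mul hM ih (norm_nonneg _) hc
      _ = c ^ (k + 1) * ‖z‖ := by ring

lemma aux_powvec {p q : Type*} [Fintype p] [Fintype q] [DecidableEq p] [DecidableEq q]
    (G : Matrix p q ℝ) (D : Matrix q p ℝ) :
    ∀ (k : ℕ) (u : q → ℝ), ((G * D) ^ k) *ᵥ (G *ᵥ u) = G *ᵥ (((D * G) ^ k) *ᵥ u) := by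
  intro k
  induction k with
  | zero => intro u; simp
  | succ k ih =>
    intro u
    rw [pow_succ', ← Matrix.mulVec_mulVec, ih]
    conv_rhs => rw [pow_succ', ← Matrix.mulVec_mulVec, ← Matrix.mulVec_mulVec]
    rw [← Matrix.mulVec_mulVec]

lemma aux_shiftvec {p q : Type*} [Fintype p] [Fintype q] [DecidableEq p] [DecidableEq q]
    (G : Matrix p q ℝ) (D : Matrix q p ℝ) (k : ℕ) (u : p → ℝ) :
    ((G * D) ^ (k + 1)) *ᵥ u = G *ᵥ (((D * G) ^ k) *ᵥ (D *ᵥ u)) := by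
  rw [pow_succ, ← Matrix.mulVec_mulVec, ← Matrix.mulVec_mulVec, aux_powvec]

lemma aux_geom_bound (L β c : ℝ) (hc : 0 ≤ c) (hβ : 0 ≤ β)
    (h : L + β * c ≤ β) : ∀ n : ℕ, L * ∑ k ∈ Finset.range n, c ^ k ≤ β := by
  intro n
  induction n with
  | zero => simpa using hβ
  | succ n ih =>
    rw [geom_sum_succ]
    nlinarith [mul_le_mul_of_nonneg_left ih hc]

lemma aux_sum_mulVec {p q ι : Type*} [Fintype q] (t : Finset ι)
    (M : ι → Matrix p q ℝ) (v : q → ℝ) :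
    (∑ k ∈ t, M k).mulVec v = ∑ k ∈ t, (M k).mulVec v := by
  ext i
  simp [Matrix.mulVec, dotProduct, Matrix.sum_apply, Finset.sum_mul]
  exact Finset.sum_comm

lemma aux_dot_sum {p ι : Type*} [Fintype p] (t : Finset ι)
    (g : p → ℝ) (z : ι → p → ℝ) :
    g ⬝ᵥ (∑ k ∈ t, z k) = ∑ k ∈ t, g ⬝ᵥ z k := by
  simp [dotProduct, Finset.sum_apply, Finset.mul_sum]
  exact Finset.sum_comm

end AuxLemmasForStmt16

/-- Core robust-feasibility claim of Theorem 4: the two convex conditions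
(i) `fᵀ H x₀ + ‖Gᵀ f‖₁ (∑_{k<N} τ^k) γ + β σw ≤ b` and
(ii) `‖Gᵀ f‖₁ + β ε ‖G‖ ≤ β`
guarantee that for every admissible uncertainty `Δ` (with `‖Δ‖ ≤ ε`, `(GΔ)^(N+1) = 0`,
`‖ΔG‖ ≤ τ`, `‖Δ H x₀‖∞ ≤ γ`) and every disturbance `w̃` with `‖w̃‖∞ ≤ σw`, the matrix
`I - GΔ` is invertible and, with the nominal response `v = H x₀ + G w̃`, the perturbed
constraint `fᵀ (v + GΔ(I - GΔ)⁻¹ v) ≤ b` holds. All matrix norms are the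
`ℓ∞ → ℓ∞` induced norms. -/
theorem stmt16 {p q s : Type*} [Fintype p] [Fintype q] [Fintype s]
    [DecidableEq p] [DecidableEq q]
    (G : Matrix p q ℝ) (H : Matrix p s ℝ) (f : p → ℝ) (x0 : s → ℝ) (N : ℕ)
    (b σw γ τ ε β : ℝ) (hβ : 0 < β) (hσw : 0 ≤ σw)
    (h1 : f ⬝ᵥ H.mulVec x0 +
        (∑ i, |Gᵀ.mulVec f i|) * (∑ k ∈ Finset.range N, τ ^ k) * γ + β * σw ≤ b)
    (h2 : (∑ i, |Gᵀ.mulVec f i|) + β * ε * ‖G‖ ≤ β) :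
    ∀ Δ : Matrix q p ℝ, ‖Δ‖ ≤ ε → (G * Δ) ^ (N + 1) = 0 → ‖Δ * G‖ ≤ τ →
      ‖Δ.mulVec (H.mulVec x0)‖ ≤ γ →
      ∀ w : q → ℝ, ‖w‖ ≤ σw →
        IsUnit (1 - G * Δ) ∧
        f ⬝ᵥ (H.mulVec x0 + G.mulVec w +
            (G * Δ * (1 - G * Δ)⁻¹).mulVec (H.mulVec x0 + G.mulVec w)) ≤ b := by
  intro Δ hΔ hnil hτ hγ w hw
  set L : ℝ := ∑ i, |Gᵀ.mulVec f i| with hLdef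
  have hL0 : 0 ≤ L := Finset.sum_nonneg fun i _ => abs_nonneg _
  have hγ0 : 0 ≤ γ := le_trans (norm_nonneg _) hγ
  have hτ0 : 0 ≤ τ := le_trans (norm_nonneg _) hτ
  have hε0 : 0 ≤ ε := le_trans (norm_nonneg _) hΔ
  have hG0 : 0 ≤ ‖G‖ := norm_nonneg _
  set A : Matrix p p ℝ := G * Δ with hAdef
  have hunit : IsUnit (1 - A) := IsNilpotent.isUnit_one_sub ⟨N + 1, hnil⟩
  refine ⟨hunit, ?_⟩
  set S : Matrix p p ℝ := ∑ k ∈ Finset.range (N + 1), A ^ k with hSdef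
  have hright : (1 - A) * S = 1 := by
    have h := mul_geom_sum A (N + 1)
    rw [hnil, zero_sub] at h
    calc (1 - A) * S = -((A - 1) * ∑ k ∈ Finset.range (N + 1), A ^ k) := by
          rw [← neg_sub A 1, neg_mul, hSdef]
      _ = 1 := by rw [h, neg_neg]
  have hinv : (1 - A)⁻¹ = S := Matrix.inv_eq_right_inv hright
  have hAS : (1 : Matrix p p ℝ) + A * S = S := by
    have hmul : A * S = ∑ k ∈ Finset.range (N + 1), A ^ (k + 1) := by
      rw [hSdef, Finset.mul_sum]
      exact Finset.sum_congr rfl fun k _ => (pow_succ' A k).symm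
    calc (1 : Matrix p p ℝ) + A * S
        = ∑ k ∈ Finset.range (N + 1), A ^ (k + 1) + A ^ 0 := by
          rw [hmul, pow_zero, add_comm]
      _ = ∑ k ∈ Finset.range (N + 2), A ^ k := (Finset.sum_range_succ' _ _).symm
      _ = S + A ^ (N + 1) := Finset.sum_range_succ _ _
      _ = S := by rw [hnil, add_zero]
  set v : p → ℝ := H.mulVec x0 + G.mulVec w with hvdef
  have hexpr : H.mulVec x0 + G.mulVec w + (A * (1 - A)⁻¹).mulVec (H.mulVec x0 + G.mulVec w)
      = S.mulVec v := by
    rw [hinv, ← hvdef]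
    calc v + (A * S).mulVec v = ((1 : Matrix p p ℝ) + A * S).mulVec v := by
          rw [Matrix.add_mulVec, Matrix.one_mulVec]
      _ = S.mulVec v := by rw [hAS]
  rw [hexpr]
  have hsum : f ⬝ᵥ S.mulVec v =
      ∑ k ∈ Finset.range (N + 1),
        (f ⬝ᵥ (A ^ k).mulVec (H.mulVec x0) + f ⬝ᵥ (A ^ k).mulVec (G.mulVec w)) := by
    rw [hSdef, aux_sum_mulVec, aux_dot_sum]
    refine Finset.sum_congr rfl fun k _ => ?_
    rw [hvdef, Matrix.mulVec_add, dotProduct_add]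
  rw [hsum, Finset.sum_add_distrib]
  have hkey : ∀ z : q → ℝ, f ⬝ᵥ (G.mulVec z) = (Gᵀ.mulVec f) ⬝ᵥ z := by
    intro z
    rw [Matrix.dotProduct_mulVec, Matrix.mulVec_transpose]
  -- initial-condition part
  have hIC : ∑ k ∈ Finset.range (N + 1), f ⬝ᵥ (A ^ k).mulVec (H.mulVec x0)
      ≤ f ⬝ᵥ H.mulVec x0 + L * (∑ k ∈ Finset.range N, τ ^ k) * γ := by
    rw [Finset.sum_range_succ' (fun k => f ⬝ᵥ (A ^ k).mulVec (H.mulVec x0)) N]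
    simp only [pow_zero, Matrix.one_mulVec]
    have htail : ∑ k ∈ Finset.range N, f ⬝ᵥ (A ^ (k + 1)).mulVec (H.mulVec x0)
        ≤ L * (∑ k ∈ Finset.range N, τ ^ k) * γ := by
      have hterm : ∀ k ∈ Finset.range N,
          f ⬝ᵥ (A ^ (k + 1)).mulVec (H.mulVec x0) ≤ L * τ ^ k * γ := by
        intro k _
        have e : f ⬝ᵥ (A ^ (k + 1)).mulVec (H.mulVec x0)
            = (Gᵀ.mulVec f) ⬝ᵥ ((Δ * G) ^ k).mulVec (Δ.mulVec (H.mulVec x0)) := by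
          rw [hAdef, aux_shiftvec, hkey]
        rw [e]
        calc (Gᵀ.mulVec f) ⬝ᵥ ((Δ * G) ^ k).mulVec (Δ.mulVec (H.mulVec x0))
            ≤ |(Gᵀ.mulVec f) ⬝ᵥ ((Δ * G) ^ k).mulVec (Δ.mulVec (H.mulVec x0))| :=
              le_abs_self _
          _ ≤ L * ‖((Δ * G) ^ k).mulVec (Δ.mulVec (H.mulVec x0))‖ := aux_abs_dot_le _ _
          _ ≤ L * (τ ^ k * γ) := by
              refine mul_le_mul_of_nonneg_left ?_ hL0
              calc ‖((Δ * G) ^ k).mulVec (Δ.mulVec (H.mulVec x0))‖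
                  ≤ τ ^ k * ‖Δ.mulVec (H.mulVec x0)‖ :=
                    aux_pow_mulVec_norm_le _ τ hτ k _
                _ ≤ τ ^ k * γ := mul_le_mul_of_nonneg_left hγ (pow_nonneg hτ0 k)
          _ = L * τ ^ k * γ := by ring
      calc ∑ k ∈ Finset.range N, f ⬝ᵥ (A ^ (k + 1)).mulVec (H.mulVec x0)
          ≤ ∑ k ∈ Finset.range N, L * τ ^ k * γ := Finset.sum_le_sum hterm
        _ = L * (∑ k ∈ Finset.range N, τ ^ k) * γ := by
            rw [Finset.mul_sum, Finset.sum_mul]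
    linarith
  -- disturbance part
  have hW : ∑ k ∈ Finset.range (N + 1), f ⬝ᵥ (A ^ k).mulVec (G.mulVec w) ≤ β * σw := by
    set c : ℝ := ε * ‖G‖ with hcdef
    have hc0 : 0 ≤ c := mul_nonneg hε0 hG0
    have hΔG : ‖Δ * G‖ ≤ c :=
      le_trans (Matrix.linfty_opNorm_mul Δ G) (mul_le_mul_of_nonneg_right hΔ hG0)
    have hterm : ∀ k ∈ Finset.range (N + 1),
        f ⬝ᵥ (A ^ k).mulVec (G.mulVec w) ≤ L * c ^ k * σw := by
      intro k _
      have e : f ⬝ᵥ (A ^ k).mulVec (G.mulVec w)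
          = (Gᵀ.mulVec f) ⬝ᵥ ((Δ * G) ^ k).mulVec w := by
        rw [hAdef, aux_powvec, hkey]
      rw [e]
      calc (Gᵀ.mulVec f) ⬝ᵥ ((Δ * G) ^ k).mulVec w
          ≤ |(Gᵀ.mulVec f) ⬝ᵥ ((Δ * G) ^ k).mulVec w| := le_abs_self _
        _ ≤ L * ‖((Δ * G) ^ k).mulVec w‖ := aux_abs_dot_le _ _
        _ ≤ L * (c ^ k * σw) := by
            refine mul_le_mul_of_nonneg_left ?_ hL0
            calc ‖((Δ * G) ^ k).mulVec w‖ ≤ c ^ k * ‖w‖ :=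
                  aux_pow_mulVec_norm_le _ c hΔG k _
              _ ≤ c ^ k * σw := mul_le_mul_of_nonneg_left hw (pow_nonneg hc0 k)
        _ = L * c ^ k * σw := by ring
    calc ∑ k ∈ Finset.range (N + 1), f ⬝ᵥ (A ^ k).mulVec (G.mulVec w)
        ≤ ∑ k ∈ Finset.range (N + 1), L * c ^ k * σw := Finset.sum_le_sum hterm
      _ = (L * ∑ k ∈ Finset.range (N + 1), c ^ k) * σw := by
          rw [Finset.mul_sum, Finset.sum_mul]
      _ ≤ β * σw := by
          refine mul_le_mul_of_nonneg_right ?_ hσw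
          refine aux_geom_bound L β c hc0 hβ.le ?_ (N + 1)
          rw [hcdef, ← mul_assoc]
          exact h2
  linarith
end
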